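/- arXiv:2310.03637 — 2 statements merged into one kernel-verified Lean document; each statement's English description precedes it below -/
import Mathlib

section
/- Let K be a field, let n ≥ 4, and let F be a keyed iterated polynomial system for Feistel-2n/n such that d_i := deg f_{L,i} ≥ 2 for all 1 ≤ i ≤ n and the monomial x_{L,i−1}^{d_i} occurs in f_{L,i} for all 2 ≤ i ≤ n. Define ĥ_1 = p_R + g_1(p_L,y), ĥ_2 = p_L + g_2(ĥ_1(y),y), ĥ_i = ĥ_{i−2} + g_i(ĥ_{i−1}(y),y) for 3 ≤ i ≤ n−1, and ĥ_n = ĥ_{n−2} + g_n(ĥ_{n−1}(y),y) − c_L, all in K[y]. Then {x_{R,2} − ĥ_1, x_{R,3} − ĥ_2, …, x_{R,n−1} − ĥ_{n−2}, x_{L,n−1} − ĥ_{n−1}, ĥ_n} is a Gröbner basis of the ideal (H) generated by the downsized system with respect to the lexicographic order x_{R,2} > ⋯ > x_{R,n−1} > x_{L,n−1} > y, and deg ĥ_i = ∏_{k=1}^{i} d_k for all 1 ≤ i ≤ n; in particular (H) ∩ K[y] = (ĥ_n) with deg ĥ_n = ∏_{k=1}^{n} d_k. -/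
open MvPolynomial
open Fin.NatCast

/-! ### Term orders, initial ideals and Gröbner bases -/

/-- Total degree of an exponent vector. -/
def expDeg {σ : Type*} (a : σ →₀ ℕ) : ℕ := a.sum fun _ e => e

/-- Degree reverse lexicographic strict order on exponent vectors; `sig j i` reads
"`j` is strictly less significant than `i`".  `a` is DRL-smaller than `b` iff its total degree
is smaller, or the degrees agree and at the least significant variable where they differ the
exponent of `a` is larger. -/
def drlLT {σ : Type*} (sig : σ → σ → Prop) (a b : σ →₀ ℕ) : Prop :=
  expDeg a < expDeg b ∨
    (expDeg a = expDeg b ∧ ∃ i, b i < a i ∧ ∀ j, sig j i → a j = b j)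

/-- Lexicographic strict order on exponent vectors; `sig i j` reads "`i` is strictly less
significant than `j`".  `a` is LEX-smaller than `b` iff at the most significant variable where
they differ the exponent of `a` is smaller. -/
def lexLT {σ : Type*} (sig : σ → σ → Prop) (a b : σ →₀ ℕ) : Prop :=
  ∃ i, a i < b i ∧ ∀ j, sig i j → a j = b j

/-- Significance relation on `Fin N` for which the variable significance is strictly
decreasing in the index (`x_0 > x_1 > ⋯`):  `sigDes i j` iff `i` is less significant
than `j`, i.e. `j < i`. -/
def sigDes {N : ℕ} (i j : Fin N) : Prop := j < i

/-- Significance relation on `Fin (N+1)` for a homogenized polynomial ring: the homogenization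
variable `x_0` (index `0`) is the least significant variable, and among the remaining variables
the significance is strictly decreasing in the index. -/
def sigH {N : ℕ} (i j : Fin (N + 1)) : Prop := j ≠ 0 ∧ (i = 0 ∨ j < i)

/-- `a` is the leading monomial (exponent vector) of `f` w.r.t. the strict term order `lt`. -/
def IsLeadMono {σ K : Type*} [CommSemiring K] (lt : (σ →₀ ℕ) → (σ →₀ ℕ) → Prop)
    (f : MvPolynomial σ K) (a : σ →₀ ℕ) : Prop :=
  a ∈ f.support ∧ ∀ b ∈ f.support, b ≠ a → lt b a

/-- The initial ideal of `I` w.r.t. the strict term order `lt`: the ideal generated by the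
leading monomials of the nonzero elements of `I`. -/
noncomputable def initialIdeal {σ K : Type*} [CommSemiring K]
    (lt : (σ →₀ ℕ) → (σ →₀ ℕ) → Prop) (I : Ideal (MvPolynomial σ K)) :
    Ideal (MvPolynomial σ K) :=
  Ideal.span {mf | ∃ f ∈ I, f ≠ 0 ∧ ∃ a, IsLeadMono lt f a ∧ mf = monomial a (1 : K)}

/-- `G` is a Gröbner basis of `I` w.r.t. the strict term order `lt`: `G ⊆ I` and the leading
monomials of the elements of `G` generate the initial ideal of `I`. -/
def IsGroebner {σ K : Type*} [CommSemiring K] (lt : (σ →₀ ℕ) → (σ →₀ ℕ) → Prop)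
    (G : Set (MvPolynomial σ K)) (I : Ideal (MvPolynomial σ K)) : Prop :=
  G ⊆ (I : Set (MvPolynomial σ K)) ∧
    Ideal.span {mf | ∃ g ∈ G, g ≠ 0 ∧ ∃ a, IsLeadMono lt g a ∧ mf = monomial a (1 : K)}
      = initialIdeal lt I

/-! ### Saturation, projective zero loci, generic coordinates, homogenization -/

/-- The saturation `I : (x_0, …, x_n)^∞ = ⋃_k (I : (x_0, …, x_n)^k)` of an ideal of a
polynomial ring with respect to the maximal ideal generated by all the variables. -/
noncomputable def maxSat {K : Type*} [Field K] {σ : Type*}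
    (I : Ideal (MvPolynomial σ K)) : Ideal (MvPolynomial σ K) :=
  ⨆ k : ℕ, Submodule.colon I (((Ideal.span (Set.range (X : σ → MvPolynomial σ K))) ^ k : Ideal (MvPolynomial σ K)) : Set (MvPolynomial σ K))

/-- The projective zero locus of `I` over the algebraic closure of `K`. -/
noncomputable def projZerosBar {K : Type*} [Field K] {σ : Type*}
    (I : Ideal (MvPolynomial σ K)) :
    Set (Projectivization (AlgebraicClosure K) (σ → AlgebraicClosure K)) :=
  {x | ∀ f ∈ I, eval x.rep (map (algebraMap K (AlgebraicClosure K)) f) = 0}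

/-- `I` is in generic coordinates (w.r.t. the homogenization variable `v0`): its projective zero
locus over the algebraic closure is finite, and either it is empty or `X v0` is a nonzerodivisor
modulo the saturation `I^sat`. -/
def GenCoords {K : Type*} [Field K] {σ : Type*} (v0 : σ)
    (I : Ideal (MvPolynomial σ K)) : Prop :=
  (projZerosBar I).Finite ∧
    (projZerosBar I = ∅ ∨ ∀ f, X v0 * f ∈ maxSat I → f ∈ maxSat I)

/-- Homogenization of `f` with respect to a new variable `x_0` placed at index `0`; the original
variables are shifted along `Fin.succ`. -/
noncomputable def homogPoly {K : Type*} [CommSemiring K] {q : ℕ}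
    (f : MvPolynomial (Fin q) K) : MvPolynomial (Fin (q + 1)) K :=
  f.support.sum fun a =>
    monomial (Finsupp.single (0 : Fin (q + 1)) (f.totalDegree - expDeg a)
      + a.mapDomain Fin.succ) (f.coeff a)

/-- Dehomogenization: substitute `x_0 ↦ 1` and shift the remaining variables back. -/
noncomputable def dehomAlg {K : Type*} [Field K] (n : ℕ) :
    MvPolynomial (Fin (n + 1)) K →ₐ[K] MvPolynomial (Fin n) K :=
  aeval fun i => Fin.cases (1 : MvPolynomial (Fin n) K) (fun j => X j) i

/-- An ideal of a polynomial ring is homogeneous if it contains all homogeneous components of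
its elements. -/
def IsHomogIdeal {σ K : Type*} [CommSemiring K] (I : Ideal (MvPolynomial σ K)) : Prop :=
  ∀ f ∈ I, ∀ d : ℕ, MvPolynomial.homogeneousComponent d f ∈ I

/-- The highest degree homogeneous component `f^top` of a polynomial. -/
noncomputable def topComp {σ K : Type*} [CommSemiring K] (f : MvPolynomial σ K) :
    MvPolynomial σ K :=
  MvPolynomial.homogeneousComponent f.totalDegree f

/-! ### Keyed iterated polynomial systems -/

/-- The univariate keyed iterated polynomial system attached to the bivariate polynomials
`g_1, …, g_n` (with `n = m + 1`, indexed here by `k = 0, …, m`), the plaintext `p` and the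
ciphertext `c`.  The ambient ring is `K[x_1, …, x_m, y]`, where `x_j` has variable index
`j - 1` and `y` has variable index `m`; in the bivariate ring `K[x, y]`, `x` has index `0`
and `y` has index `1`.  Explicitly, `keyedF m g p c 0 = g 1 (p, y) - x 1`,
`keyedF m g p c k = g (k+1) (x k, y) - x (k+1)` for `1 ≤ k ≤ m - 1` and
`keyedF m g p c m = g (m+1) (x m, y) - c`. -/
noncomputable def keyedF {K : Type*} [Field K] (m : ℕ)
    (g : ℕ → MvPolynomial (Fin 2) K) (p c : K) (k : ℕ) :
    MvPolynomial (Fin (m + 1)) K :=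
  aeval ![if k = 0 then C p else X (((k - 1 : ℕ)) : Fin (m + 1)),
          X ((m : ℕ) : Fin (m + 1))] (g k)
    - (if k < m then X ((k : ℕ) : Fin (m + 1)) else C c)

/-- The chain `ĝ_1 = g_1(p, y)`, `ĝ_{k+1} = g_{k+1}(ĝ_k(y), y)` of univariate polynomials
(0-based indexing: `ghat g p k = ĝ_{k+1}`). -/
noncomputable def ghat {K : Type*} [Field K] (g : ℕ → MvPolynomial (Fin 2) K)
    (p : K) : ℕ → Polynomial K
  | 0 => aeval ![Polynomial.C p, Polynomial.X] (g 0)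
  | (k + 1) => aeval ![ghat g p k, Polynomial.X] (g (k + 1))

/-- Embed a univariate polynomial into `K[x_1, …, x_m, y]` via the variable `y`. -/
noncomputable def yPoly {K : Type*} [Field K] (m : ℕ) (q : Polynomial K) :
    MvPolynomial (Fin (m + 1)) K :=
  Polynomial.aeval (X ((m : ℕ) : Fin (m + 1))) q

/-- The (monic, up to a unit) greatest common divisor of two univariate polynomials over a
field. -/
noncomputable def polyGCD {K : Type*} [Field K] (f g : Polynomial K) : Polynomial K :=
  @EuclideanDomain.gcd _ _ (Classical.decEq _) f g

/-- The number of distinct roots of a univariate polynomial in the base field. -/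
noncomputable def numRoots {K : Type*} [Field K] (f : Polynomial K) : ℕ :=
  letI := Classical.decEq K
  f.roots.toFinset.card

/-! ### Feistel-2n/n keyed iterated polynomial systems -/

/-- The nonlinear ("left branch") polynomials of the keyed iterated polynomial system for
Feistel-`2n/n` (with `n = m + 1`, indexed here by `k = 0, …, m`).  The ambient ring is
`K[x_{L,1}, x_{R,1}, …, x_{L,m}, x_{R,m}, y]` where `x_{L,j}` has variable index `2(j-1)`,
`x_{R,j}` has variable index `2(j-1) + 1` and `y` has variable index `2m`. -/
noncomputable def fstL {K : Type*} [Field K] (m : ℕ) (g : ℕ → MvPolynomial (Fin 2) K)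
    (pL pR cL : K) (k : ℕ) : MvPolynomial (Fin (2 * m + 1)) K :=
  (if k = 0 then C pR else X (((2 * (k - 1) + 1 : ℕ)) : Fin (2 * m + 1)))
  + aeval ![if k = 0 then C pL else X (((2 * (k - 1) : ℕ)) : Fin (2 * m + 1)),
            X (((2 * m : ℕ)) : Fin (2 * m + 1))] (g k)
  - (if k < m then X (((2 * k : ℕ)) : Fin (2 * m + 1)) else C cL)

/-- The linear ("right branch") polynomials of the keyed iterated polynomial system for
Feistel-`2n/n` (same variable conventions as in `fstL`). -/
noncomputable def fstR {K : Type*} [Field K] (m : ℕ) (pL cR : K) (k : ℕ) :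
    MvPolynomial (Fin (2 * m + 1)) K :=
  (if k = 0 then C pL else X (((2 * (k - 1) : ℕ)) : Fin (2 * m + 1)))
  - (if k < m then X (((2 * k + 1 : ℕ)) : Fin (2 * m + 1)) else C cR)

/-- The downsized Feistel system `H = {f̃_1, …, f̃_n}` (with `n = m + 1`, indexed here by
`k = 0, …, m`), obtained by substituting the linear polynomials into the nonlinear ones.  The
ambient ring is `K[x_{R,2}, …, x_{R,m}, x_{L,m}, y]` where `x_{R,j}` has variable index
`j - 2`, `x_{L,m}` has variable index `m - 1` and `y` has variable index `m`. -/
noncomputable def hTil {K : Type*} [Field K] (m : ℕ) (g : ℕ → MvPolynomial (Fin 2) K)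
    (pL pR cL : K) (k : ℕ) : MvPolynomial (Fin (m + 1)) K :=
  (if k = 0 then C pR else if k = 1 then C pL else X (((k - 2 : ℕ)) : Fin (m + 1)))
  + aeval ![if k = 0 then C pL else X (((k - 1 : ℕ)) : Fin (m + 1)),
            X ((m : ℕ) : Fin (m + 1))] (g k)
  - (if k < m then X ((k : ℕ) : Fin (m + 1)) else C cL)

/-- The chain `ĥ_1 = p_R + g_1(p_L, y)`, `ĥ_2 = p_L + g_2(ĥ_1, y)`,
`ĥ_i = ĥ_{i-2} + g_i(ĥ_{i-1}, y)` of univariate polynomials (0-based indexing: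
`hHat g pL pR k = ĥ_{k+1}`). -/
noncomputable def hHat {K : Type*} [Field K] (g : ℕ → MvPolynomial (Fin 2) K)
    (pL pR : K) : ℕ → Polynomial K
  | 0 => Polynomial.C pR + aeval ![Polynomial.C pL, Polynomial.X] (g 0)
  | 1 => Polynomial.C pL + aeval ![hHat g pL pR 0, Polynomial.X] (g 1)
  | (k + 2) => hHat g pL pR k + aeval ![hHat g pL pR (k + 1), Polynomial.X] (g (k + 2))

/-! ### Two plain/ciphertext systems -/

/-- A univariate keyed iterated polynomial system placed inside the ring
`K[u_1, …, u_m, v_1, …, v_m, y]` (`u_j` has index `j - 1`, `v_j` has index `m + j - 1`, `y` has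
index `2m`), with the state variables offset by `off` (so `off = 0` uses the `u`-variables and
`off = m` the `v`-variables). -/
noncomputable def twoF {K : Type*} [Field K] (m : ℕ) (g : ℕ → MvPolynomial (Fin 2) K)
    (p c : K) (off : ℕ) (k : ℕ) : MvPolynomial (Fin (2 * m + 1)) K :=
  aeval ![if k = 0 then C p else X (((off + (k - 1) : ℕ)) : Fin (2 * m + 1)),
          X (((2 * m : ℕ)) : Fin (2 * m + 1))] (g k)
  - (if k < m then X (((off + k : ℕ)) : Fin (2 * m + 1)) else C c)

/-! ### Macaulay spaces, degree falls, last fall degree, satiety, degree of regularity -/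

/-- The row space `W_{F,d}` of the degree-`d` inhomogeneous Macaulay matrix of the system `F`:
all polynomials of the form `∑ gᵢ·fᵢ` with `deg (gᵢ·fᵢ) ≤ d` for every `i`. -/
def Wsp {σ K ι : Type*} [CommSemiring K] [Fintype ι]
    (F : ι → MvPolynomial σ K) (d : ℕ) : Set (MvPolynomial σ K) :=
  {f | ∃ g : ι → MvPolynomial σ K, f = ∑ i, g i * F i ∧ ∀ i, (g i * F i).totalDegree ≤ d}

/-- `d_f`: the least degree `d` with `f ∈ W_{F,d}`. -/
noncomputable def dfall {σ K ι : Type*} [CommSemiring K] [Fintype ι]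
    (F : ι → MvPolynomial σ K) (f : MvPolynomial σ K) : ℕ :=
  sInf {d : ℕ | f ∈ Wsp F d}

/-- The last fall degree `d_F ∈ ℕ ∪ {∞}`: the least `d` such that every `f` in the ideal
generated by `F` lies in `W_{F, max (d, deg f)}` (the value `∞` imposes no condition since
`W_{F,∞} = (F)`). -/
noncomputable def lastFall {σ K ι : Type*} [CommSemiring K] [Fintype ι]
    (F : ι → MvPolynomial σ K) : ℕ∞ :=
  sInf {d : ℕ∞ | ∀ e : ℕ, d = (e : ℕ∞) →
    ∀ f ∈ Ideal.span (Set.range F), f ∈ Wsp F (max e f.totalDegree)}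

/-- The satiety of a homogeneous ideal: the least `s` such that `I` and `I^sat` agree in all
degrees `l ≥ s`. -/
noncomputable def satiety {σ K : Type*} [Field K] (I : Ideal (MvPolynomial σ K)) : ℕ :=
  sInf {s : ℕ | ∀ l, s ≤ l → ∀ f : MvPolynomial σ K, f.IsHomogeneous l →
    (f ∈ I ↔ f ∈ maxSat I)}

/-- The degree of regularity `d_reg(F) ∈ ℕ ∪ {∞}` of a polynomial system: the least `d` such
that every homogeneous polynomial of degree `d` lies in the ideal generated by the highest
degree components `F^top`. -/
noncomputable def dregSys {σ K : Type*} [CommSemiring K] (F : Set (MvPolynomial σ K)) : ℕ∞ :=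
  sInf {e : ℕ∞ | ∃ d : ℕ, e = (d : ℕ∞) ∧ ∀ f : MvPolynomial σ K, f.IsHomogeneous d →
    f ∈ Ideal.span (topComp '' F)}

/-!
Modulo the basis elements `x_j - ĥ_j(y)` already obtained, every state variable of the
downsized system may be replaced by the corresponding `ĥ_j(y)`; the recursion defining `ĥ` then
turns `f̃_k` into `±(x_k - ĥ_k(y))`, and `f̃_n` into `ĥ_n(y)`. Hence `(H)` is generated by the
triangular set `{x_k - ĥ_k(y), ĥ_n(y)}`. For this set the Gröbner property is elementary: a LEX
leading monomial containing some `x_k` is divisible by `x_k`; one that is a pure power of the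
last variable `y` forces the whole polynomial into `K[y]`, and substituting `x_k ↦ ĥ_k(y)` shows
that it is a multiple of `ĥ_n`.

For the degrees, `x^{d_i}` occurs in `g_i` and `deg ĥ_{i-1} ≥ 2`, so in `g_i(ĥ_{i-1}(y), y)`
the term `x^{d_i}` strictly dominates all others; thus `deg ĥ_i = d_i · deg ĥ_{i-1}`, which
also exceeds `deg ĥ_{i-2}`.
-/

section MvPolynomialAux

variable {R σ : Type*} [CommSemiring R]

lemma aeval_X_eq_sum_monomial (t : σ) (q : Polynomial R) :
    Polynomial.aeval (X t : MvPolynomial σ R) q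
      = ∑ j ∈ q.support, monomial (Finsupp.single t j) (q.coeff j) := by
  rw [Polynomial.aeval_def, Polynomial.eval₂_eq_sum, Polynomial.sum]
  refine Finset.sum_congr rfl fun j _ => ?_
  rw [algebraMap_eq, C_mul_X_pow_eq_monomial]

lemma coeff_single_aeval_X (t : σ) (q : Polynomial R) (j : ℕ) :
    coeff (Finsupp.single t j) (Polynomial.aeval (X t : MvPolynomial σ R) q) = q.coeff j := by
  classical
  rw [aeval_X_eq_sum_monomial, coeff_sum]
  simp only [coeff_monomial, (Finsupp.single_injective t).eq_iff]
  rw [Finset.sum_ite_eq', ite_eq_left_iff]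
  exact fun h => (Polynomial.notMem_support_iff.mp h).symm

lemma mem_support_aeval_X {t : σ} {q : Polynomial R} {a : σ →₀ ℕ} :
    a ∈ (Polynomial.aeval (X t : MvPolynomial σ R) q).support
      ↔ ∃ j ∈ q.support, Finsupp.single t j = a := by
  classical
  constructor
  · intro ha
    rw [aeval_X_eq_sum_monomial] at ha
    obtain ⟨j, hj, ha⟩ := Finset.mem_biUnion.mp (support_sum ha)
    exact ⟨j, hj, (Finset.mem_singleton.mp (support_monomial_subset ha)).symm⟩
  · rintro ⟨j, hj, rfl⟩
    rw [mem_support_iff, coeff_single_aeval_X]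
    exact Polynomial.mem_support_iff.mp hj

lemma totalDegree_aeval_X (t : σ) (q : Polynomial R) :
    (Polynomial.aeval (X t : MvPolynomial σ R) q).totalDegree = q.natDegree := by
  apply le_antisymm
  · refine Finset.sup_le fun a ha => ?_
    obtain ⟨j, hj, rfl⟩ := mem_support_aeval_X.mp ha
    simpa using Polynomial.le_natDegree_of_mem_supp j hj
  · rcases eq_or_ne q 0 with rfl | hq
    · simp
    · simpa using le_totalDegree
        (mem_support_aeval_X.mpr ⟨_, Polynomial.natDegree_mem_support_of_nonzero hq, rfl⟩)

lemma exists_aeval_X_eq_of_vars_subset {f : MvPolynomial σ R} {t : σ} (h : f.vars ⊆ {t}) :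
    ∃ r : Polynomial R, Polynomial.aeval (X t : MvPolynomial σ R) r = f := by
  refine ⟨aeval (fun _ => Polynomial.X) f, ?_⟩
  conv_rhs => rw [← aeval_X_left_apply f]
  rw [comp_aeval_apply, Polynomial.aeval_X, aeval_def, aeval_def]
  refine eval₂_congr _ _ _ fun {i c} hi hc => ?_
  have hi : i ∈ f.vars := (mem_vars_iff_mem_support i).mpr ⟨c, mem_support_iff.mpr hc, hi⟩
  rw [Finset.mem_singleton.mp (h hi)]

lemma totalDegree_rename_of_injective {τ : Type*} {f : σ → τ} (hf : Function.Injective f)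
    (p : MvPolynomial σ R) : (rename f p).totalDegree = p.totalDegree := by
  classical
  simp only [totalDegree, support_rename_of_injective hf, Finset.sup_image]
  exact Finset.sup_congr rfl fun a _ =>
    Finsupp.sum_mapDomain_index (h := fun _ e => e) (fun _ => rfl) (fun _ _ _ => rfl)

lemma totalDegree_add_eq_left_of_totalDegree_le_one {f ℓ : MvPolynomial σ R}
    (hℓ : ℓ.totalDegree ≤ 1) (h : 2 ≤ (f + ℓ).totalDegree) :
    (f + ℓ).totalDegree = f.totalDegree := by
  have := totalDegree_add f ℓ
  exact totalDegree_add_eq_left_of_totalDegree_lt (by omega)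

lemma coeff_single_add_of_totalDegree_le_one {f ℓ : MvPolynomial σ R}
    (hℓ : ℓ.totalDegree ≤ 1) (i : σ) {e : ℕ} (he : 2 ≤ e) :
    coeff (Finsupp.single i e) (f + ℓ) = coeff (Finsupp.single i e) f := by
  have he0 : e ≠ 0 := by omega
  rw [coeff_add, coeff_eq_zero_of_totalDegree_lt (f := ℓ), add_zero]
  simp only [Finsupp.support_single i he0, Finset.sum_singleton, Finsupp.single_eq_same]
  omega

lemma totalDegree_ite_X_C_le_one [Nontrivial R] (c : Prop) [Decidable c] (i : σ) (a : R) :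
    (if c then X i else C a : MvPolynomial σ R).totalDegree ≤ 1 := by
  split_ifs
  · exact (totalDegree_X i).le
  · simp

lemma aeval_X_pair_eq_rename (a b : σ) (G : MvPolynomial (Fin 2) R) :
    aeval ![(X a : MvPolynomial σ R), X b] G = rename ![a, b] G := by
  rw [rename_eq_aeval]
  congr 2
  funext i
  fin_cases i <;> rfl

lemma monomial_one_mem_span_of_le {s : Set (MvPolynomial σ R)} {a b : σ →₀ ℕ}
    (hb : monomial b (1 : R) ∈ s) (hba : b ≤ a) :
    monomial a (1 : R) ∈ Ideal.span s := by
  rw [← add_tsub_cancel_of_le hba, ← one_mul (1 : R), ← monomial_mul]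
  exact Ideal.mul_mem_right _ _ (Ideal.subset_span hb)

lemma IsLeadMono.ne_zero {lt : (σ →₀ ℕ) → (σ →₀ ℕ) → Prop} {f : MvPolynomial σ R}
    {a : σ →₀ ℕ} (hf : IsLeadMono lt f a) : f ≠ 0 := by
  rintro rfl
  simpa using hf.1

end MvPolynomialAux

lemma map_aeval_pair {R A B : Type*} [CommSemiring R] [CommSemiring A] [CommSemiring B]
    [Algebra R A] [Algebra R B] (φ : A →ₐ[R] B) (a b : A) (G : MvPolynomial (Fin 2) R) :
    φ (aeval ![a, b] G) = aeval ![φ a, φ b] G := by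
  rw [comp_aeval_apply]
  congr 2
  funext i
  fin_cases i <;> rfl

lemma natDegree_aeval_pair_X {R : Type*} [CommRing R] [IsDomain R]
    {G : MvPolynomial (Fin 2) R} {d : ℕ} (hG : G.totalDegree ≤ d)
    (hc : G.coeff (Finsupp.single 0 d) ≠ 0) {q : Polynomial R}
    (hq : 2 ≤ q.natDegree) :
    (aeval ![q, Polynomial.X] G).natDegree = d * q.natDegree := by
  classical
  set D := q.natDegree
  set T : (Fin 2 →₀ ℕ) → Polynomial R :=
    fun a => Polynomial.C (G.coeff a) * (q ^ a 0 * Polynomial.X ^ a 1)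
  have hsum : aeval ![q, Polynomial.X] G = ∑ a ∈ G.support, T a := by
    simp [aeval_def, eval₂_eq', Fin.prod_univ_two, T]
  have hlow : ∀ a ∈ G.support, a ≠ Finsupp.single 0 d → (T a).natDegree < d * D := by
    intro a ha hne
    have hdeg : a 0 + a 1 ≤ d := by
      simpa [Finsupp.sum_fintype, Fin.sum_univ_two] using (le_totalDegree ha).trans hG
    have ha0 : a 0 < d := by
      by_contra! h
      apply hne
      ext i
      fin_cases i <;> simp <;> omega
    calc (T a).natDegree ≤ a 0 * D + a 1 := by
          refine (Polynomial.natDegree_C_mul_le _ _).trans (Polynomial.natDegree_mul_le.trans ?_)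
          gcongr
          · exact Polynomial.natDegree_pow_le
          · exact Polynomial.natDegree_X_pow_le _
      _ < d * D := by nlinarith
  have hmain : (T (Finsupp.single 0 d)).natDegree = d * D := by
    simp [T, D, Polynomial.natDegree_C_mul hc, Polynomial.natDegree_pow]
  have hmain0 : T (Finsupp.single 0 d) ≠ 0 := by
    have hq0 : q ≠ 0 := Polynomial.ne_zero_of_natDegree_gt hq
    simp [T, hc, hq0]
  rw [hsum, ← Finset.add_sum_erase _ _ (mem_support_iff.mpr hc),
    Polynomial.natDegree_add_eq_left_of_degree_lt, hmain]
  refine (Polynomial.degree_sum_le _ _).trans_lt ?_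
  rw [Polynomial.degree_eq_natDegree hmain0, hmain, Finset.sup_lt_iff (WithBot.bot_lt_coe _)]
  intro a ha
  exact Polynomial.degree_le_natDegree.trans_lt (WithBot.coe_lt_coe.mpr
    (hlow a (Finset.mem_of_mem_erase ha) (Finset.ne_of_mem_erase ha)))

theorem span_image_Iio_eq_of_triangular {R : Type*} [CommRing R] {F G : ℕ → R} {n : ℕ}
    (h : ∀ k < n, ∃ u : Rˣ, F k - u * G k ∈ Ideal.span (G '' Set.Iio k)) :
    Ideal.span (F '' Set.Iio n) = Ideal.span (G '' Set.Iio n) := by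
  induction n with
  | zero => simp
  | succ n ih =>
    obtain ⟨u, hu⟩ := h n n.lt_succ_self
    have hIio : Set.Iio (n + 1) = insert n (Set.Iio n) := by ext; simp
    rw [hIio, Set.image_insert_eq, Set.image_insert_eq, Ideal.span_insert, Ideal.span_insert,
      ih fun k hk => h k (hk.trans n.lt_succ_self)]
    apply le_antisymm <;> refine sup_le ?_ le_sup_right <;> rw [Ideal.span_singleton_le_iff_mem]
    · rw [← sub_add_cancel (F n) (u * G n)]
      exact add_mem (Ideal.mem_sup_right hu)
        (Ideal.mem_sup_left (Ideal.mul_mem_left _ _ (Ideal.mem_span_singleton_self _)))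
    · rw [show G n = (u⁻¹ : Rˣ) * (F n - (F n - u * G n)) by simp]
      exact Ideal.mul_mem_left _ _ (sub_mem
        (Ideal.mem_sup_left (Ideal.mem_span_singleton_self _)) (Ideal.mem_sup_right hu))

section Lex

variable {R : Type*} {N : ℕ}

lemma lexLT_sigDes_asymm {a b : Fin N →₀ ℕ} (hab : lexLT sigDes a b) :
    ¬ lexLT sigDes b a := by
  rintro ⟨j, hj, hj'⟩
  obtain ⟨i, hi, hi'⟩ := hab
  rcases lt_trichotomy i j with hij | rfl | hji
  · exact hi.ne (hj' i hij).symm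
  · omega
  · exact hj.ne (hi' j hji).symm

lemma IsLeadMono.lex_unique [CommSemiring R] {f : MvPolynomial (Fin N) R} {a b : Fin N →₀ ℕ}
    (ha : IsLeadMono (lexLT sigDes) f a) (hb : IsLeadMono (lexLT sigDes) f b) : a = b := by
  by_contra hab
  exact lexLT_sigDes_asymm (hb.2 a ha.1 hab) (ha.2 b hb.1 (Ne.symm hab))

lemma isLeadMono_aeval_X [CommSemiring R] {t : Fin N} {q : Polynomial R} (hq : q ≠ 0) :
    IsLeadMono (lexLT sigDes) (Polynomial.aeval (X t : MvPolynomial (Fin N) R) q)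
      (Finsupp.single t q.natDegree) := by
  refine ⟨mem_support_aeval_X.mpr ⟨_, Polynomial.natDegree_mem_support_of_nonzero hq, rfl⟩,
    fun b hb hne => ?_⟩
  obtain ⟨j, hj, rfl⟩ := mem_support_aeval_X.mp hb
  have hlt : j < q.natDegree :=
    (Polynomial.le_natDegree_of_mem_supp j hj).lt_of_ne fun h => hne (h ▸ rfl)
  refine ⟨t, by simpa using hlt, fun i (hi : i < t) => ?_⟩
  simp [hi.ne']

lemma isLeadMono_X_sub_aeval_X [CommRing R] [Nontrivial R] {i t : Fin N} (hit : i < t)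
    (q : Polynomial R) :
    IsLeadMono (lexLT sigDes) (X i - Polynomial.aeval (X t : MvPolynomial (Fin N) R) q)
      (Finsupp.single i 1) := by
  classical
  set P := Polynomial.aeval (X t : MvPolynomial (Fin N) R) q
  have hP : ∀ b ∈ P.support, ∀ j < t, b j = 0 := by
    intro b hb j hj
    obtain ⟨k, -, rfl⟩ := mem_support_aeval_X.mp hb
    simp [hj.ne]
  have hPi : Finsupp.single i 1 ∉ P.support := fun h => by simpa using hP _ h i hit
  refine ⟨?_, fun b hb hne => ?_⟩
  · rw [mem_support_iff, coeff_sub, coeff_X, if_pos rfl, notMem_support_iff.mp hPi, sub_zero]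
    exact one_ne_zero
  · have hbP : b ∈ P.support := by
      rw [mem_support_iff, coeff_sub, coeff_X, if_neg (Ne.symm hne), zero_sub, neg_ne_zero] at hb
      exact mem_support_iff.mpr hb
    refine ⟨i, by simp [hP b hbP i hit], fun j (hj : j < i) => ?_⟩
    simp [hP b hbP j (hj.trans hit), hj.ne]

lemma IsLeadMono.vars_subset_of_lexLT_sigDes [CommSemiring R] {f : MvPolynomial (Fin N) R}
    {a : Fin N →₀ ℕ} {t : Fin N} (ht : ∀ j, j ≤ t) (hf : IsLeadMono (lexLT sigDes) f a)
    (ha : ∀ j ≠ t, a j = 0) : f.vars ⊆ {t} := by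
  intro i hi
  obtain ⟨b, hb, hib⟩ := (mem_vars_iff_mem_support i).mp hi
  rw [Finset.mem_singleton]
  by_contra hit
  have hbi : b i ≠ 0 := Finsupp.mem_support_iff.mp hib
  by_cases hba : b = a
  · exact hbi (hba ▸ ha i hit)
  obtain ⟨k, hk, hk'⟩ := hf.2 b hb hba
  obtain rfl : k = t := by
    by_contra hkt
    rw [ha k hkt] at hk
    omega
  exact hbi ((hk' i ((ht i).lt_of_ne hit)).trans (ha i hit))

end Lex

section ShapeBasis

variable {K : Type*} [Field K] (m : ℕ) (p : ℕ → Polynomial K) (q : Polynomial K)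

noncomputable def shapeBasis (k : ℕ) : MvPolynomial (Fin (m + 1)) K :=
  if k < m then X ((k : ℕ) : Fin (m + 1)) - yPoly m (p k) else yPoly m q

noncomputable def shapeEval : MvPolynomial (Fin (m + 1)) K →ₐ[K] Polynomial K :=
  aeval fun j => if (j : ℕ) < m then p j else Polynomial.X

variable {m p}

lemma shapeEval_X_of_lt {k : ℕ} (hk : k < m) :
    shapeEval m p (X ((k : ℕ) : Fin (m + 1))) = p k := by
  simp [shapeEval, Fin.val_cast_of_lt (Nat.lt_succ_of_lt hk), hk]

lemma shapeEval_yPoly (r : Polynomial K) : shapeEval m p (yPoly m r) = r := by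
  rw [yPoly, ← Polynomial.aeval_algHom_apply]
  simp [shapeEval]

lemma map_shapeEval_span_shapeBasis_le :
    (Ideal.span (shapeBasis m p q '' Set.Iic m)).map (shapeEval m p) ≤ Ideal.span {q} := by
  rw [Ideal.map_span, Ideal.span_le]
  rintro _ ⟨_, ⟨k, hk, rfl⟩, rfl⟩
  rcases (Set.mem_Iic.mp hk).lt_or_eq with hk | rfl
  · simp [shapeBasis, hk, shapeEval_X_of_lt, shapeEval_yPoly]
  · simp [shapeBasis, shapeEval_yPoly]

lemma comap_yPoly_span_shapeBasis :
    Ideal.comap (Polynomial.aeval (X ((m : ℕ) : Fin (m + 1)) : MvPolynomial (Fin (m + 1)) K))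
      (Ideal.span (shapeBasis m p q '' Set.Iic m)) = Ideal.span {q} := by
  apply le_antisymm
  · intro r hr
    rw [← shapeEval_yPoly (m := m) (p := p) r]
    exact map_shapeEval_span_shapeBasis_le q (Ideal.mem_map_of_mem _ hr)
  · rw [Ideal.span_le, Set.singleton_subset_iff]
    exact Ideal.subset_span ⟨m, Set.mem_Iic.mpr le_rfl, if_neg (lt_irrefl m)⟩

lemma isLeadMono_shapeBasis_of_lt {k : ℕ} (hk : k < m) :
    IsLeadMono (lexLT sigDes) (shapeBasis m p q k)
      (Finsupp.single ((k : ℕ) : Fin (m + 1)) 1) := by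
  rw [shapeBasis, if_pos hk]
  refine isLeadMono_X_sub_aeval_X ?_ (p k)
  rw [Fin.lt_def, Fin.val_cast_of_lt (Nat.lt_succ_of_lt hk),
    Fin.val_cast_of_lt (Nat.lt_succ_self m)]
  exact hk

theorem isGroebner_span_shapeBasis (hq : q ≠ 0) :
    IsGroebner (lexLT sigDes) (shapeBasis m p q '' Set.Iic m)
      (Ideal.span (shapeBasis m p q '' Set.Iic m)) := by
  set y : Fin (m + 1) := ((m : ℕ) : Fin (m + 1))
  have hy : (y : ℕ) = m := Fin.val_cast_of_lt (Nat.lt_succ_self m)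
  refine ⟨Ideal.subset_span, le_antisymm (Ideal.span_mono ?_) ?_⟩
  · rintro _ ⟨f, hf, hf0, a, ha, rfl⟩
    exact ⟨f, Ideal.subset_span hf, hf0, a, ha, rfl⟩
  rw [initialIdeal, Ideal.span_le]
  rintro _ ⟨f, hf, hf0, a, ha, rfl⟩
  by_cases hx : ∃ j ≠ y, a j ≠ 0
  · obtain ⟨j, hjy, hja⟩ := hx
    have hj : (j : ℕ) < m := by
      have := j.isLt
      have : (j : ℕ) ≠ m := fun h => hjy (Fin.ext (h.trans hy.symm))
      omega
    have hlead := isLeadMono_shapeBasis_of_lt (p := p) q hj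
    rw [Fin.cast_val_eq_self] at hlead
    exact monomial_one_mem_span_of_le ⟨_, ⟨j, Set.mem_Iic.mpr hj.le, rfl⟩, hlead.ne_zero, _,
      hlead, rfl⟩ (Finsupp.single_le_iff.mpr (Nat.one_le_iff_ne_zero.mpr hja))
  push Not at hx
  have hvars := ha.vars_subset_of_lexLT_sigDes
    (fun j => Fin.le_def.mpr (by have := j.isLt; omega)) hx
  obtain ⟨r, rfl⟩ := exists_aeval_X_eq_of_vars_subset hvars
  have hr : r ∈ Ideal.span {q} := by rw [← comap_yPoly_span_shapeBasis q]; exact hf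
  have hr0 : r ≠ 0 := by rintro rfl; simp at hf0
  have hlead :
      IsLeadMono (lexLT sigDes) (shapeBasis m p q m) (Finsupp.single y q.natDegree) := by
    rw [shapeBasis, if_neg (lt_irrefl m)]
    exact isLeadMono_aeval_X hq
  rw [ha.lex_unique (isLeadMono_aeval_X hr0)]
  exact monomial_one_mem_span_of_le
    ⟨_, ⟨m, Set.mem_Iic.mpr le_rfl, rfl⟩, hlead.ne_zero, _, hlead, rfl⟩
    (Finsupp.single_le_single.mpr
      (Polynomial.natDegree_le_of_dvd (Ideal.mem_span_singleton.mp hr) hr0))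

end ShapeBasis

lemma two_le_prod_range {d : ℕ → ℕ} {k : ℕ} (hd : ∀ j ≤ k, 2 ≤ d j) :
    2 ≤ ∏ j ∈ Finset.range (k + 1), d j := by
  induction k with
  | zero => simpa using hd 0 le_rfl
  | succ k ih =>
    rw [Finset.prod_range_succ]
    exact (ih fun j hj => hd j (hj.trans k.le_succ)).trans
      (Nat.le_mul_of_pos_right _ (by linarith [hd (k + 1) le_rfl]))

section Feistel

variable {K : Type*} [Field K] (m : ℕ) (g : ℕ → MvPolynomial (Fin 2) K) (pL pR cL : K)

-- `hHatExt j = ĥ_{j-1}` with `ĥ_{-1} = p_R`, `ĥ_0 = p_L`, which makes the recursion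
-- `ĥ_i = ĥ_{i-2} + g_i(ĥ_{i-1}, y)` uniform; `hTilState` holds the matching entries of `H`.
noncomputable def hHatExt : ℕ → Polynomial K
  | 0 => Polynomial.C pR
  | 1 => Polynomial.C pL
  | k + 2 => hHat g pL pR k

lemma hHat_eq_hHatExt (k : ℕ) :
    hHat g pL pR k
      = hHatExt g pL pR k + aeval ![hHatExt g pL pR (k + 1), Polynomial.X] (g k) := by
  rcases k with _ | _ | k <;> rfl

noncomputable def hTilState : ℕ → MvPolynomial (Fin (m + 1)) K
  | 0 => C pR
  | 1 => C pL
  | k + 2 => X ((k : ℕ) : Fin (m + 1))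

lemma hTil_eq_hTilState (k : ℕ) :
    hTil m g pL pR cL k = hTilState m pL pR k
      + aeval ![hTilState m pL pR (k + 1), X ((m : ℕ) : Fin (m + 1))] (g k)
      - (if k < m then X ((k : ℕ) : Fin (m + 1)) else C cL) := by
  rcases k with _ | _ | k <;> simp [hTil, hTilState]

lemma hTil_sub_unit_mul_shapeBasis_mem {k : ℕ} (hk : k ≤ m) :
    ∃ u : (MvPolynomial (Fin (m + 1)) K)ˣ,
      hTil m g pL pR cL k - u * shapeBasis m (hHat g pL pR) (hHat g pL pR m - Polynomial.C cL) k
        ∈ Ideal.span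
          (shapeBasis m (hHat g pL pR) (hHat g pL pR m - Polynomial.C cL) '' Set.Iio k) := by
  set B := shapeBasis m (hHat g pL pR) (hHat g pL pR m - Polynomial.C cL)
  set π := Ideal.Quotient.mkₐ K (Ideal.span (B '' Set.Iio k))
  have hstate : ∀ j ≤ k + 1, π (hTilState m pL pR j) = π (yPoly m (hHatExt g pL pR j)) := by
    rintro (_ | _ | j) hj
    · simp [hTilState, hHatExt, yPoly]
    · simp [hTilState, hHatExt, yPoly]
    · rw [Ideal.Quotient.mkₐ_eq_mk, Ideal.Quotient.eq]
      exact Ideal.subset_span ⟨j, Set.mem_Iio.mpr (by omega), if_pos (by omega)⟩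
  have hround : π (hTil m g pL pR cL k)
      = π (yPoly m (hHat g pL pR k) - (if k < m then X ((k : ℕ) : Fin (m + 1)) else C cL)) := by
    rw [hTil_eq_hTilState, hHat_eq_hHatExt, yPoly, map_add, map_aeval_pair, Polynomial.aeval_X,
      map_sub, map_sub, map_add, map_add, map_aeval_pair, map_aeval_pair, hstate k (by omega),
      hstate (k + 1) le_rfl]
    rfl
  rcases hk.lt_or_eq with hk | rfl
  · refine ⟨-1, ?_⟩
    rw [← Ideal.Quotient.eq, ← Ideal.Quotient.mkₐ_eq_mk K, hround, if_pos hk]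
    congr 1
    simp [B, shapeBasis, hk]
  · refine ⟨1, ?_⟩
    rw [← Ideal.Quotient.eq, ← Ideal.Quotient.mkₐ_eq_mk K, hround, if_neg (lt_irrefl k)]
    congr 1
    simp [B, shapeBasis, yPoly]

lemma span_hTil_eq_span_shapeBasis :
    Ideal.span (hTil m g pL pR cL '' Set.Iic m) = Ideal.span
      (shapeBasis m (hHat g pL pR) (hHat g pL pR m - Polynomial.C cL) '' Set.Iic m) := by
  rw [← Set.Iio_add_one_eq_Iic]
  exact span_image_Iio_eq_of_triangular fun k hk =>
    hTil_sub_unit_mul_shapeBasis_mem m g pL pR cL (Nat.lt_succ_iff.mp hk)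

lemma fstL_zero_eq_add : ∃ ℓ : MvPolynomial (Fin (2 * m + 1)) K, ℓ.totalDegree ≤ 1 ∧
    fstL m g pL pR cL 0
      = Polynomial.aeval (X ((2 * m : ℕ) : Fin (2 * m + 1))) (hHat g pL pR 0) + ℓ := by
  refine ⟨-(if 0 < m then X ((2 * 0 : ℕ) : Fin (2 * m + 1)) else C cL),
    (totalDegree_neg _).trans_le (totalDegree_ite_X_C_le_one _ _ _), ?_⟩
  rw [fstL, hHat, map_add, map_aeval_pair]
  simp [sub_eq_add_neg]

lemma fstL_eq_rename_add {k : ℕ} (hk : k ≠ 0) :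
    ∃ ℓ : MvPolynomial (Fin (2 * m + 1)) K, ℓ.totalDegree ≤ 1 ∧ fstL m g pL pR cL k =
      rename ![((2 * (k - 1) : ℕ) : Fin (2 * m + 1)), ((2 * m : ℕ) : Fin (2 * m + 1))] (g k)
        + ℓ := by
  refine ⟨X ((2 * (k - 1) + 1 : ℕ) : Fin (2 * m + 1))
      - (if k < m then X ((2 * k : ℕ) : Fin (2 * m + 1)) else C cL),
    (totalDegree_sub _ _).trans (max_le (totalDegree_X _).le (totalDegree_ite_X_C_le_one _ _ _)),
    ?_⟩
  rw [fstL, if_neg hk, if_neg hk, aeval_X_pair_eq_rename]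
  ring

lemma natDegree_hHat_zero (h : 2 ≤ (fstL m g pL pR cL 0).totalDegree) :
    (hHat g pL pR 0).natDegree = (fstL m g pL pR cL 0).totalDegree := by
  obtain ⟨ℓ, hℓ, he⟩ := fstL_zero_eq_add m g pL pR cL
  rw [he] at h ⊢
  rw [totalDegree_add_eq_left_of_totalDegree_le_one hℓ h, totalDegree_aeval_X]

lemma totalDegree_le_and_coeff_ne_zero_of_fstL {k : ℕ} (hk : k ≠ 0) (hkm : k ≤ m)
    (hdeg : 2 ≤ (fstL m g pL pR cL k).totalDegree)
    (hmon : (fstL m g pL pR cL k).coeff (Finsupp.single ((2 * (k - 1) : ℕ) : Fin (2 * m + 1))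
      (fstL m g pL pR cL k).totalDegree) ≠ 0) :
    (g k).totalDegree ≤ (fstL m g pL pR cL k).totalDegree ∧
      (g k).coeff (Finsupp.single 0 (fstL m g pL pR cL k).totalDegree) ≠ 0 := by
  set e := ![((2 * (k - 1) : ℕ) : Fin (2 * m + 1)), ((2 * m : ℕ) : Fin (2 * m + 1))]
  have he : Function.Injective e := by
    have hne : ((2 * (k - 1) : ℕ) : Fin (2 * m + 1)) ≠ ((2 * m : ℕ) : Fin (2 * m + 1)) := by
      rw [Ne, Fin.ext_iff, Fin.val_cast_of_lt (by omega), Fin.val_cast_of_lt (by omega)]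
      omega
    intro i j hij
    fin_cases i <;> fin_cases j <;> simp_all [e]
  obtain ⟨ℓ, hℓ, hfe⟩ := fstL_eq_rename_add m g pL pR cL hk
  rw [hfe] at hdeg hmon ⊢
  refine ⟨(totalDegree_add_eq_left_of_totalDegree_le_one hℓ hdeg).trans
    (totalDegree_rename_of_injective he _) |>.ge, ?_⟩
  rw [coeff_single_add_of_totalDegree_le_one hℓ _ hdeg] at hmon
  rwa [← coeff_rename_mapDomain e he, Finsupp.mapDomain_single]

lemma natDegree_hHat {d : ℕ → ℕ} (hd : ∀ k ≤ m, 2 ≤ d k)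
    (h0 : (hHat g pL pR 0).natDegree = d 0)
    (hg : ∀ k, 1 ≤ k → k ≤ m →
      (g k).totalDegree ≤ d k ∧ (g k).coeff (Finsupp.single 0 (d k)) ≠ 0) :
    ∀ k ≤ m, (hHat g pL pR k).natDegree = ∏ j ∈ Finset.range (k + 1), d j := by
  intro k
  induction k using Nat.strong_induction_on with
  | _ k ih =>
    intro hk
    rcases k with _ | k
    · simpa using h0
    have hk' : (hHat g pL pR k).natDegree = ∏ j ∈ Finset.range (k + 1), d j :=
      ih k k.lt_succ_self (by omega)
    obtain ⟨hgd, hgc⟩ := hg (k + 1) (by omega) hk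
    have hP := two_le_prod_range (k := k) fun j hj => hd j (by omega)
    have hcomp := natDegree_aeval_pair_X hgd hgc (q := hHat g pL pR k) (hk' ▸ hP)
    have hext : (hHatExt g pL pR (k + 1)).natDegree ≤ ∏ j ∈ Finset.range (k + 1), d j := by
      rcases k with _ | k
      · simp [hHatExt]
      · rw [show hHatExt g pL pR (k + 2) = hHat g pL pR k from rfl, ih k (by omega) (by omega),
          Finset.prod_range_succ _ (k + 1)]
        exact Nat.le_mul_of_pos_right _ (by linarith [hd (k + 1) (by omega)])
    rw [hHat_eq_hHatExt]
    change (hHatExt g pL pR (k + 1) + aeval ![hHat g pL pR k, Polynomial.X] (g (k + 1))).natDegree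
      = _
    rw [Polynomial.natDegree_add_eq_right_of_natDegree_lt, hcomp, hk',
      Finset.prod_range_succ _ (k + 1), mul_comm]
    rw [hcomp, hk']
    exact hext.trans_lt (by nlinarith [hd (k + 1) hk])

end Feistel

theorem stmt_12_general {K : Type*} [Field K] (m : ℕ)
    (g : ℕ → MvPolynomial (Fin 2) K) (pL pR cL : K)
    (hdeg : ∀ k ≤ m, 2 ≤ (fstL m g pL pR cL k).totalDegree)
    (hmon : ∀ k, 1 ≤ k → k ≤ m →
      (fstL m g pL pR cL k).coeff (Finsupp.single (((2 * (k - 1) : ℕ)) : Fin (2 * m + 1))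
        ((fstL m g pL pR cL k).totalDegree)) ≠ 0) :
    IsGroebner (lexLT sigDes)
      ((fun k => if k < m then X ((k : ℕ) : Fin (m + 1)) - yPoly m (hHat g pL pR k)
        else yPoly m (hHat g pL pR m - Polynomial.C cL)) '' Set.Iic m)
      (Ideal.span ((hTil m g pL pR cL) '' Set.Iic m))
    ∧ (∀ k ≤ m, (if k < m then hHat g pL pR k else hHat g pL pR m - Polynomial.C cL).natDegree
        = ∏ j ∈ Finset.range (k + 1), (fstL m g pL pR cL j).totalDegree)
    ∧ Ideal.comap
        (Polynomial.aeval (X ((m : ℕ) : Fin (m + 1)) : MvPolynomial (Fin (m + 1)) K))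
        (Ideal.span ((hTil m g pL pR cL) '' Set.Iic m))
      = Ideal.span {hHat g pL pR m - Polynomial.C cL} := by
  have hdegs := natDegree_hHat m g pL pR hdeg
    (natDegree_hHat_zero m g pL pR cL (hdeg 0 m.zero_le)) fun k hk hkm =>
      totalDegree_le_and_coeff_ne_zero_of_fstL m g pL pR cL (by omega) hkm (hdeg k hkm)
        (hmon k hk hkm)
  have hq : (hHat g pL pR m - Polynomial.C cL).natDegree = (hHat g pL pR m).natDegree :=
    Polynomial.natDegree_sub_C
  have hq0 : hHat g pL pR m - Polynomial.C cL ≠ 0 := by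
    intro h
    have := two_le_prod_range (k := m) fun j hj => hdeg j hj
    rw [← hdegs m le_rfl, ← hq, h, Polynomial.natDegree_zero] at this
    omega
  rw [span_hTil_eq_span_shapeBasis]
  refine ⟨isGroebner_span_shapeBasis _ hq0, fun k hk => ?_, comap_yPoly_span_shapeBasis _⟩
  split_ifs with hkm
  · exact hdegs k hk
  · rw [le_antisymm hk (not_lt.mp hkm), hq]
    exact hdegs m le_rfl

/-- (`n = m + 1 ≥ 4`.) The polynomials
`x_{R,2} - ĥ_1, …, x_{R,n-1} - ĥ_{n-2}, x_{L,n-1} - ĥ_{n-1}, ĥ_n` form a LEX Gröbner basis of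
the ideal generated by the downsized Feistel system, `deg ĥ_i = ∏_{k=1}^i d_k`, and the
elimination ideal `(H) ∩ K[y]` is generated by `ĥ_n`. -/
theorem stmt_12 {K : Type*} [Field K] (m : ℕ) (hm : 3 ≤ m)
    (g : ℕ → MvPolynomial (Fin 2) K) (pL pR cL cR : K)
    (hgnc : ∀ k ≤ m, 0 < (g k).totalDegree)
    (hzero : ∃ z : Fin (2 * m + 1) → K, ∀ k ≤ m,
      eval z (fstL m g pL pR cL k) = 0 ∧ eval z (fstR m pL cR k) = 0)
    (hdeg : ∀ k ≤ m, 2 ≤ (fstL m g pL pR cL k).totalDegree)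
    (hmon : ∀ k, 1 ≤ k → k ≤ m →
      (fstL m g pL pR cL k).coeff (Finsupp.single (((2 * (k - 1) : ℕ)) : Fin (2 * m + 1))
        ((fstL m g pL pR cL k).totalDegree)) ≠ 0) :
    IsGroebner (lexLT sigDes)
      ((fun k => if k < m then X ((k : ℕ) : Fin (m + 1)) - yPoly m (hHat g pL pR k)
        else yPoly m (hHat g pL pR m - Polynomial.C cL)) '' Set.Iic m)
      (Ideal.span ((hTil m g pL pR cL) '' Set.Iic m))
    ∧ (∀ k ≤ m, (if k < m then hHat g pL pR k else hHat g pL pR m - Polynomial.C cL).natDegree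
        = ∏ j ∈ Finset.range (k + 1), (fstL m g pL pR cL j).totalDegree)
    ∧ Ideal.comap
        (Polynomial.aeval (X ((m : ℕ) : Fin (m + 1)) : MvPolynomial (Fin (m + 1)) K))
        (Ideal.span ((hTil m g pL pR cL) '' Set.Iic m))
      = Ideal.span {hHat g pL pR m - Polynomial.C cL} :=
  stmt_12_general m g pL pR cL hdeg hmon
end

section
/- Let K be a field and let F = {f_1,…,f_m} ⊆ P = K[x_1,…,x_n] be a polynomial system. Then: (a) if the set D = {d ≥ 1 : W_{F,d} ∩ P_{≤d−1} ≠ W_{F,d−1}} is nonempty and bounded above, then the last fall degree d_F equals max D; (b) d_F ≥ sup{d_f : f ∈ (F) with d_f > deg f}; (c) if d_F < ∞ and some f ∈ (F) has a degree fall, then d_F = max{d_f : f ∈ (F) with d_f > deg f}. -/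
open MvPolynomial
open Fin.NatCast

/-! The spaces `W_{F,d}` increase with `d`, so `f ∈ W_{F,d}` iff `d_f ≤ d`. Hence `f` lies in
`W_{F, max(d, deg f)}` iff `d ≥ d_f` or `f` has no degree fall, and the last fall degree is the
supremum of the degree falls `d_f > deg f`. Moreover `d ∈ D` exactly when `d = d_f` for some `f`
with a degree fall, namely any `f ∈ (W_{F,d} ∩ P_{≤d-1}) \ W_{F,d-1}`; this gives all three parts. -/

section LastFallDegree

variable {σ K ι : Type*} [CommSemiring K] [Fintype ι] {F : ι → MvPolynomial σ K}

theorem Wsp_mono : Monotone (Wsp F) := by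
  rintro d d' h f ⟨g, rfl, hg⟩
  exact ⟨g, rfl, fun i => (hg i).trans h⟩

theorem totalDegree_le_of_mem_Wsp {d : ℕ} {f : MvPolynomial σ K} (h : f ∈ Wsp F d) :
    f.totalDegree ≤ d := by
  obtain ⟨g, rfl, hg⟩ := h
  exact (totalDegree_finsetSum _ _).trans (Finset.sup_le fun i _ => hg i)

theorem Wsp_subset_span (d : ℕ) :
    Wsp F d ⊆ (Ideal.span (Set.range F) : Set (MvPolynomial σ K)) := by
  rintro f ⟨g, rfl, -⟩
  exact Ideal.sum_mem _ fun i _ => Ideal.mul_mem_left _ _ (Ideal.subset_span ⟨i, rfl⟩)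

theorem exists_mem_Wsp {f : MvPolynomial σ K} (h : f ∈ Ideal.span (Set.range F)) :
    ∃ d, f ∈ Wsp F d := by
  obtain ⟨g, rfl⟩ := (Submodule.mem_span_range_iff_exists_fun _).mp h
  exact ⟨Finset.univ.sup fun i => (g i * F i).totalDegree, g, rfl,
    fun i => Finset.le_sup (f := fun i => (g i * F i).totalDegree) (Finset.mem_univ i)⟩

theorem mem_Wsp_iff_dfall_le {f : MvPolynomial σ K} (hf : f ∈ Ideal.span (Set.range F))
    (d : ℕ) : f ∈ Wsp F d ↔ dfall F f ≤ d :=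
  ⟨fun h => Nat.sInf_le h, fun h => Wsp_mono h (Nat.sInf_mem (exists_mem_Wsp hf))⟩

variable (F) in
def degreeFalls : Set ℕ :=
  {d | ∃ f ∈ Ideal.span (Set.range F), dfall F f = d ∧ f.totalDegree < d}

theorem forall_mem_Wsp_max_iff (e : ℕ) :
    (∀ f ∈ Ideal.span (Set.range F), f ∈ Wsp F (max e f.totalDegree)) ↔
      ∀ d ∈ degreeFalls F, d ≤ e := by
  refine ⟨?_, fun h f hf => ?_⟩
  · rintro h d ⟨f, hf, rfl, hfall⟩
    have := (mem_Wsp_iff_dfall_le hf _).mp (h f hf)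
    omega
  · rw [mem_Wsp_iff_dfall_le hf]
    by_cases hfall : f.totalDegree < dfall F f
    · exact le_max_of_le_left (h _ ⟨f, hf, rfl, hfall⟩)
    · exact le_max_of_le_right (not_lt.mp hfall)

theorem lastFall_eq_iSup_degreeFalls : lastFall F = ⨆ d ∈ degreeFalls F, (d : ℕ∞) := by
  refine le_antisymm ?_ (le_sInf fun a ha => ?_)
  · induction h : ⨆ d ∈ degreeFalls F, (d : ℕ∞) using ENat.recTopCoe with
    | top => exact le_top
    | coe m =>
      refine sInf_le fun e he => ?_
      rw [← Nat.cast_inj.mp he, forall_mem_Wsp_max_iff]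
      exact fun d hd => by
        exact_mod_cast (le_iSup₂ (f := fun d (_ : d ∈ degreeFalls F) => (d : ℕ∞)) d hd).trans_eq h
  · induction a using ENat.recTopCoe with
    | top => exact le_top
    | coe e =>
      have := (forall_mem_Wsp_max_iff e).mp (ha e rfl)
      exact iSup₂_le fun d hd => by exact_mod_cast this d hd

theorem degreeFalls_eq :
    degreeFalls F = {d | 1 ≤ d ∧ Wsp F d ∩ {f | f.totalDegree ≤ d - 1} ≠ Wsp F (d - 1)} := by
  ext d
  constructor
  · rintro ⟨f, hf, rfl, hfall⟩
    refine ⟨by omega, fun heq => ?_⟩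
    have hf' : f ∈ Wsp F (dfall F f - 1) :=
      heq ▸ ⟨(mem_Wsp_iff_dfall_le hf _).mpr le_rfl, show f.totalDegree ≤ _ by omega⟩
    rw [mem_Wsp_iff_dfall_le hf] at hf'
    omega
  · rintro ⟨hd, hne⟩
    have hsub : Wsp F (d - 1) ⊆ Wsp F d ∩ {f | f.totalDegree ≤ d - 1} :=
      fun f hf => ⟨Wsp_mono (Nat.sub_le d 1) hf, totalDegree_le_of_mem_Wsp hf⟩
    obtain ⟨f, ⟨hfW, hdeg : f.totalDegree ≤ d - 1⟩, hfW'⟩ :=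
      Set.exists_of_ssubset (hsub.ssubset_of_ne (Ne.symm hne))
    have hf := Wsp_subset_span d hfW
    rw [mem_Wsp_iff_dfall_le hf] at hfW hfW'
    exact ⟨f, hf, by omega, by omega⟩

end LastFallDegree

/-- Characterizations of the last fall degree: (a) if the set of degrees `d`
with `W_{F,d} ∩ P_{≤ d-1} ≠ W_{F,d-1}` is nonempty and bounded above, the last fall degree is
its maximum; (b) the last fall degree dominates every degree fall; (c) if the last fall degree
is finite and a degree fall exists, it equals the largest degree fall. -/
theorem stmt_15 {K : Type*} [Field K] {nv mI : ℕ}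
    (F : Fin mI → MvPolynomial (Fin nv) K) :
    ((({d : ℕ | 1 ≤ d ∧
        Wsp F d ∩ {f | f.totalDegree ≤ d - 1} ≠ Wsp F (d - 1)} : Set ℕ).Nonempty →
      BddAbove {d : ℕ | 1 ≤ d ∧ Wsp F d ∩ {f | f.totalDegree ≤ d - 1} ≠ Wsp F (d - 1)} →
      lastFall F = ((sSup {d : ℕ | 1 ≤ d ∧
        Wsp F d ∩ {f | f.totalDegree ≤ d - 1} ≠ Wsp F (d - 1)} : ℕ) : ℕ∞)))
    ∧ sSup {e : ℕ∞ | ∃ f ∈ Ideal.span (Set.range F),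
        e = ((dfall F f : ℕ) : ℕ∞) ∧ f.totalDegree < dfall F f} ≤ lastFall F
    ∧ (lastFall F ≠ ⊤ →
        (∃ f ∈ Ideal.span (Set.range F), f.totalDegree < dfall F f) →
        lastFall F = sSup {e : ℕ∞ | ∃ f ∈ Ideal.span (Set.range F),
          e = ((dfall F f : ℕ) : ℕ∞) ∧ f.totalDegree < dfall F f}) := by
  have hfalls : {e : ℕ∞ | ∃ f ∈ Ideal.span (Set.range F),
      e = ((dfall F f : ℕ) : ℕ∞) ∧ f.totalDegree < dfall F f} = (↑) '' degreeFalls F := by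
    ext e
    constructor
    · rintro ⟨f, hf, rfl, hfall⟩
      exact ⟨_, ⟨f, hf, rfl, hfall⟩, rfl⟩
    · rintro ⟨_, ⟨f, hf, rfl, hfall⟩, rfl⟩
      exact ⟨f, hf, rfl, hfall⟩
  have hlast : lastFall F = sSup {e : ℕ∞ | ∃ f ∈ Ideal.span (Set.range F),
      e = ((dfall F f : ℕ) : ℕ∞) ∧ f.totalDegree < dfall F f} := by
    rw [hfalls, sSup_image, lastFall_eq_iSup_degreeFalls]
  refine ⟨fun _ hbdd => ?_, hlast.ge, fun _ _ => hlast⟩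
  rw [lastFall_eq_iSup_degreeFalls, ENat.natCast_sSup hbdd, degreeFalls_eq]
end
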